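/- arXiv:2303.12047 — 5 statements merged into one kernel-verified Lean document; each statement's English description precedes it below -/
import Mathlib

section
/- Let Z and W be complex Banach spaces, U a connected open subset of Z, and F : U → GL(W) a holomorphic map such that ‖F(ζ)w‖ = ‖w‖ for all ζ ∈ U and w ∈ W. Then F is constant. -/
open NormedSpace in
/-- Let `Z` and `W` be complex Banach spaces, `U` a connected open subset of
`Z`, and `F : U → GL(W)` a holomorphic map (into the Banach space of continuous linear
endomorphisms of `W`, with invertible values) such that `‖F ζ w‖ = ‖w‖` for all `ζ ∈ U` and
`w ∈ W`.  Then `F` is constant. -/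
theorem stmt_0
    {Z W : Type*} [NormedAddCommGroup Z] [NormedSpace ℂ Z] [CompleteSpace Z]
    [NormedAddCommGroup W] [NormedSpace ℂ W] [CompleteSpace W]
    (U : Set Z) (hUopen : IsOpen U) (hUconn : IsConnected U)
    (F : Z → W →L[ℂ] W)
    (hF : DifferentiableOn ℂ F U)
    (hFinv : ∀ ζ ∈ U, ∃ G : W →L[ℂ] W,
      G.comp (F ζ) = ContinuousLinearMap.id ℂ W ∧ (F ζ).comp G = ContinuousLinearMap.id ℂ W)
    (hFiso : ∀ ζ ∈ U, ∀ w : W, ‖F ζ w‖ = ‖w‖) :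
    ∀ ζ₁ ∈ U, ∀ ζ₂ ∈ U, F ζ₁ = F ζ₂ := by
  intro ζ₁ hζ₁ ζ₂ hζ₂
  obtain ⟨A, hA1, hA2⟩ := hFinv ζ₁ hζ₁
  have hA1' : ∀ w, A (F ζ₁ w) = w := fun w => by
    have := congrArg (fun T : W →L[ℂ] W => T w) hA1; simpa using this
  have hA2' : ∀ w, F ζ₁ (A w) = w := fun w => by
    have := congrArg (fun T : W →L[ℂ] W => T w) hA2; simpa using this
  have hAiso : ∀ w, ‖A w‖ = ‖w‖ := fun w => by
    conv_rhs => rw [← hA2' w, hFiso ζ₁ hζ₁]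
  suffices key : ∀ ζ ∈ U, F ζ = F ζ₁ by
    rw [key ζ₂ hζ₂]
  intro ζ hζ
  set T : W →L[ℂ] W := (F ζ).comp A with hT
  -- the maximum-modulus step
  have step : ∀ (φ : W →L[ℂ] ℂ) (y : W) (P : W →L[ℂ] W), ‖φ‖ = 1 →
      (∀ w, ‖P w‖ = ‖w‖) → φ (P y) = (‖y‖ : ℂ) →
      ∀ ζ' ∈ U, φ (F ζ' (A (P y))) = (‖y‖ : ℂ) := by
    intro φ y P hφ hP hPy ζ' hζ'
    set f : Z → ℂ := fun z => φ (F z (A (P y))) with hf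
    have hd : DifferentiableOn ℂ f U :=
      (differentiableOn_const φ).clm_apply (hF.clm_apply (differentiableOn_const _))
    have hfζ₁ : f ζ₁ = (‖y‖ : ℂ) := by
      simp only [hf, hA2' (P y), hPy]
    have hmax : IsMaxOn (norm ∘ f) U ζ₁ := by
      intro z hz
      simp only [Function.comp_apply, Set.mem_setOf_eq, hfζ₁]
      calc ‖f z‖ ≤ ‖φ‖ * ‖F z (A (P y))‖ := φ.le_opNorm _
        _ = ‖y‖ := by rw [hφ, one_mul, hFiso z hz, hAiso, hP]
        _ ≤ ‖(‖y‖ : ℂ)‖ := by simp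
    have := Complex.eqOn_of_isPreconnected_of_isMaxOn_norm hUconn.isPreconnected hUopen hd
      hζ₁ hmax hζ'
    simpa [Function.const, hfζ₁] using this
  -- iterate: powers of T
  have hTiso : ∀ w, ‖T w‖ = ‖w‖ := fun w => by
    simp only [hT, ContinuousLinearMap.comp_apply, hFiso ζ hζ, hAiso]
  have hTpow : ∀ n : ℕ, ∀ w, ‖(T ^ n) w‖ = ‖w‖ := by
    intro n
    induction n with
    | zero => simp
    | succ n ih =>
      intro w
      rw [pow_succ, ContinuousLinearMap.mul_apply, ih, hTiso]
  have hpows : ∀ (φ : W →L[ℂ] ℂ) (y : W), ‖φ‖ = 1 → φ y = (‖y‖ : ℂ) →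
      ∀ n : ℕ, φ ((T ^ n) y) = (‖y‖ : ℂ) := by
    intro φ y hφ hy n
    induction n with
    | zero => simpa using hy
    | succ n ih =>
      have h := step φ y (T ^ n) hφ (hTpow n) ih ζ hζ
      rw [pow_succ']
      simpa [hT] using h
  -- evaluate φ on exp (λ • T) y
  have hexp : ∀ (lam : ℂ) (φ : W →L[ℂ] ℂ) (y : W), ‖φ‖ = 1 → φ y = (‖y‖ : ℂ) →
      φ (exp (lam • T) y) = Complex.exp lam * (‖y‖ : ℂ) := by
    intro lam φ y hφ hy
    have hsum : Summable fun n : ℕ => ((n.factorial : ℂ))⁻¹ • (lam • T) ^ n :=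
      expSeries_summable' (𝕂 := ℂ) (lam • T)
    set ψ : (W →L[ℂ] W) →L[ℂ] ℂ := φ.comp (ContinuousLinearMap.apply ℂ W y) with hψdef
    have hψ : ∀ S : W →L[ℂ] W, ψ S = φ (S y) := fun S => rfl
    have h1 : φ (exp (lam • T) y) = ψ (∑' n : ℕ, ((n.factorial : ℂ))⁻¹ • (lam • T) ^ n) := by
      rw [hψ, exp_eq_tsum ℂ]
    rw [h1, ψ.map_tsum hsum]
    have h2 : ∀ n : ℕ, ψ (((n.factorial : ℂ))⁻¹ • (lam • T) ^ n) = (((n.factorial : ℂ))⁻¹ * lam ^ n) * (‖y‖ : ℂ) := by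
      intro n
      rw [map_smul, hψ, smul_pow, ContinuousLinearMap.smul_apply, map_smul,
        hpows φ y hφ hy n, smul_eq_mul, smul_eq_mul, mul_assoc]
    simp_rw [h2]
    rw [tsum_mul_right]
    congr 1
    rw [Complex.exp_eq_exp_ℂ, exp_eq_tsum ℂ]
    simp [smul_eq_mul]
  -- expansivity: lower bound
  have hlow : ∀ (lam : ℂ) (y : W), ‖Complex.exp lam‖ * ‖y‖ ≤ ‖exp (lam • T) y‖ := by
    intro lam y
    rcases eq_or_ne y 0 with rfl | hy
    · simp
    obtain ⟨φ, hφ, hφy⟩ := exists_dual_vector ℂ y (norm_ne_zero_iff.mpr hy)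
    have h := hexp lam φ y hφ hφy
    calc ‖Complex.exp lam‖ * ‖y‖ = ‖φ (exp (lam • T) y)‖ := by
          rw [h, norm_mul, Complex.norm_real, Real.norm_of_nonneg (norm_nonneg y)]
      _ ≤ ‖φ‖ * ‖exp (lam • T) y‖ := φ.le_opNorm _
      _ = ‖exp (lam • T) y‖ := by rw [hφ, one_mul]
  -- exp (-lam • T) is the inverse
  have hmul : ∀ lam : ℂ, exp (-lam • T) * exp (lam • T) = 1 := by
    intro lam
    rw [← exp_add_of_commute_of_mem_ball (𝕂 := ℂ) (((Commute.refl T).smul_left (-lam)).smul_right lam)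
      ((expSeries_radius_eq_top ℂ (W →L[ℂ] W)).symm ▸ edist_lt_top _ _)
      ((expSeries_radius_eq_top ℂ (W →L[ℂ] W)).symm ▸ edist_lt_top _ _)]
    rw [← add_smul, neg_add_cancel, zero_smul, exp_zero]
  -- upper bound
  have hup : ∀ (lam : ℂ) (y : W), ‖exp (lam • T) y‖ ≤ ‖Complex.exp lam‖ * ‖y‖ := by
    intro lam y
    have h1 := hlow (-lam) (exp (lam • T) y)
    have h2 : exp (-lam • T) (exp (lam • T) y) = y := by
      rw [← ContinuousLinearMap.mul_apply, hmul, ContinuousLinearMap.one_apply]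
    rw [h2] at h1
    have hpos : 0 < ‖Complex.exp (-lam)‖ := by
      simp [Complex.exp_ne_zero]
    have hne : ‖Complex.exp (-lam)‖ * ‖Complex.exp lam‖ = 1 := by
      rw [← norm_mul, ← Complex.exp_add, neg_add_cancel, Complex.exp_zero, norm_one]
    calc ‖exp (lam • T) y‖
        = (‖Complex.exp (-lam)‖ * ‖Complex.exp lam‖) * ‖exp (lam • T) y‖ := by
          rw [hne, one_mul]
      _ = ‖Complex.exp lam‖ * (‖Complex.exp (-lam)‖ * ‖exp (lam • T) y‖) := by ring
      _ ≤ ‖Complex.exp lam‖ * ‖y‖ := by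
          have := mul_le_mul_of_nonneg_left h1 (norm_nonneg (Complex.exp lam))
          linarith [this]
  -- the bounded entire function
  have hbd : ∀ lam : ℂ, ‖Complex.exp (-lam) • exp (lam • T)‖ ≤ 1 := by
    intro lam
    apply ContinuousLinearMap.opNorm_le_bound _ zero_le_one
    intro y
    simp only [ContinuousLinearMap.smul_apply, norm_smul]
    calc ‖Complex.exp (-lam)‖ * ‖exp (lam • T) y‖
        ≤ ‖Complex.exp (-lam)‖ * (‖Complex.exp lam‖ * ‖y‖) :=
          mul_le_mul_of_nonneg_left (hup lam y) (norm_nonneg _)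
      _ = (‖Complex.exp (-lam)‖ * ‖Complex.exp lam‖) * ‖y‖ := by ring
      _ = 1 * ‖y‖ := by
          rw [← norm_mul, ← Complex.exp_add, neg_add_cancel, Complex.exp_zero, norm_one]
  have hdiff : Differentiable ℂ (fun lam : ℂ => Complex.exp (-lam) • exp (lam • T)) := by
    apply Differentiable.smul (c := fun lam : ℂ => Complex.exp (-lam)) (f := fun lam : ℂ => exp (lam • T))
    · exact Complex.differentiable_exp.comp differentiable_neg
    · intro lam
      exact (hasDerivAt_exp_smul_const T lam).differentiableAt
  have hconst : ∀ lam : ℂ, Complex.exp (-lam) • exp (lam • T) = 1 := by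
    intro lam
    have hb : Bornology.IsBounded
        (Set.range fun lam : ℂ => Complex.exp (-lam) • exp (lam • T)) := by
      rw [isBounded_iff_forall_norm_le]
      exact ⟨1, by rintro x ⟨lam, rfl⟩; exact hbd lam⟩
    have h1 := hdiff.apply_eq_apply_of_bounded hb lam 0
    simpa [exp_zero] using h1
  have hexp_eq : ∀ lam : ℂ, exp (lam • T) = Complex.exp lam • (1 : W →L[ℂ] W) := by
    intro lam
    calc exp (lam • T)
        = (Complex.exp lam * Complex.exp (-lam)) • exp (lam • T) := by
          rw [← Complex.exp_add, add_neg_cancel, Complex.exp_zero, one_smul]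
      _ = Complex.exp lam • (Complex.exp (-lam) • exp (lam • T)) := by rw [mul_smul]
      _ = Complex.exp lam • (1 : W →L[ℂ] W) := by rw [hconst lam]
  -- extract T = 1 by differentiating at 0
  have hd1 : HasDerivAt (fun lam : ℂ => exp (lam • T)) (exp ((0 : ℂ) • T) * T) 0 :=
    hasDerivAt_exp_smul_const T 0
  have hd2 : HasDerivAt (fun lam : ℂ => Complex.exp lam • (1 : W →L[ℂ] W))
      (Complex.exp 0 • (1 : W →L[ℂ] W)) 0 := (Complex.hasDerivAt_exp 0).smul_const (1 : W →L[ℂ] W)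
  rw [funext hexp_eq] at hd1
  have hT1 : T = 1 := by
    have := hd1.unique hd2
    rw [zero_smul, exp_zero, one_mul, Complex.exp_zero, one_smul] at this
    exact this
  -- conclude
  ext w
  have : T (F ζ₁ w) = F ζ₁ w := by rw [hT1, ContinuousLinearMap.one_apply]
  calc F ζ w = F ζ (A (F ζ₁ w)) := by rw [hA1' w]
    _ = T (F ζ₁ w) := rfl
    _ = F ζ₁ w := this
end

section
/- Let W be a complex Banach space and P, Q continuous linear endomorphisms of W with P an isometric bijection. If there is r > 0 with ‖(P + ζQ)w‖ = ‖w‖ for all |ζ| < r and all w ∈ W, then Q = 0. -/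
/-- Let `W` be a complex Banach space and `P, Q` continuous linear
endomorphisms of `W` with `P` an isometric bijection.  If there is `r > 0` with
`‖(P + ζQ)w‖ = ‖w‖` for all `|ζ| < r` and all `w ∈ W`, then `Q = 0`. -/
theorem stmt_2
    {W : Type*} [NormedAddCommGroup W] [NormedSpace ℂ W] [CompleteSpace W]
    (P Q : W →L[ℂ] W)
    (hPiso : ∀ w : W, ‖P w‖ = ‖w‖) (hPbij : Function.Bijective P)
    (h : ∃ r : ℝ, 0 < r ∧ ∀ ζ : ℂ, ‖ζ‖ < r → ∀ w : W, ‖(P + ζ • Q) w‖ = ‖w‖) :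
    Q = 0 := by
  obtain ⟨r, hr, hiso⟩ := h
  -- construct the continuous inverse of `P`
  set e : W ≃ₗ[ℂ] W := LinearEquiv.ofBijective (P : W →ₗ[ℂ] W) hPbij with he
  have heP : ∀ v : W, P (e.symm v) = v := fun v => e.apply_symm_apply v
  have hes : ∀ v : W, ‖e.symm v‖ = ‖v‖ := fun v => by
    rw [← hPiso (e.symm v), heP]
  set Pi : W →L[ℂ] W :=
    LinearMap.mkContinuous (e.symm : W →ₗ[ℂ] W) 1
      (fun v => by simp [hes v]) with hPi
  have hPiapp : ∀ v : W, Pi v = e.symm v := fun _ => rfl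
  set B : W →L[ℂ] W := Pi.comp Q with hB
  have hPB : ∀ v : W, P (B v) = Q v := fun v => by
    simp [hB, hPiapp, heP]
  -- the key isometry property for `I + ζ B`
  have key : ∀ ζ : ℂ, ‖ζ‖ < r → ∀ v : W, ‖v + ζ • B v‖ = ‖v‖ := by
    intro ζ hζ v
    have : P (v + ζ • B v) = (P + ζ • Q) v := by
      simp [map_add, map_smul, hPB]
    rw [← hPiso (v + ζ • B v), this, hiso ζ hζ v]
  -- it suffices to show `B = 0`
  suffices hB0 : ∀ v : W, B v = 0 by
    ext v
    have := hPB v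
    rw [hB0 v, map_zero] at this
    simp [← this]
  intro w
  -- iterated maps `f n ζ = (I + ζ B)^n w`
  set f : ℕ → ℂ → W := fun n => Nat.rec (fun _ => w)
    (fun _ g ζ => g ζ + ζ • B (g ζ)) n with hf
  have hfS : ∀ n ζ, f (n + 1) ζ = f n ζ + ζ • B (f n ζ) := fun _ _ => rfl
  have hfzero : ∀ n, f n 0 = w := by
    intro n; induction n with
    | zero => rfl
    | succ n ih => rw [hfS, ih]; simp
  have hfnorm : ∀ n, ∀ ζ : ℂ, ‖ζ‖ < r → ‖f n ζ‖ = ‖w‖ := by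
    intro n; induction n with
    | zero => intro ζ _; rfl
    | succ n ih =>
      intro ζ hζ
      rw [hfS, key ζ hζ (f n ζ), ih ζ hζ]
  have hfdiff : ∀ n, Differentiable ℂ (f n) := by
    intro n; induction n with
    | zero => exact differentiable_const w
    | succ n ih =>
      have hd : Differentiable ℂ (fun ζ => B (f n ζ)) := B.differentiable.comp ih
      exact ih.add (differentiable_id.smul hd)
  have hfderiv : ∀ n, HasDerivAt (f n) ((n : ℂ) • B w) 0 := by
    intro n; induction n with
    | zero => rw [Nat.cast_zero, zero_smul]; exact hasDerivAt_const (0 : ℂ) w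
    | succ n ih =>
      have hBf : HasDerivAt (fun ζ => B (f n ζ)) (B ((n : ℂ) • B w)) 0 :=
        B.hasFDerivAt.comp_hasDerivAt 0 ih
      have hsmul : HasDerivAt (fun ζ : ℂ => ζ • B (f n ζ))
          ((0 : ℂ) • B ((n : ℂ) • B w) + (1 : ℂ) • B (f n 0)) 0 :=
        (hasDerivAt_id (0 : ℂ)).smul hBf
      have hsum := ih.add hsmul
      simp only [hfzero, zero_smul, zero_add, one_smul] at hsum
      have heq : ((n : ℂ)) • B w + B w = (((n + 1 : ℕ)) : ℂ) • B w := by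
        push_cast
        rw [add_smul, one_smul]
      rw [heq] at hsum
      exact hsum
  -- Schwarz lemma gives `n ‖B w‖ ≤ C` for all `n`
  by_contra hBw
  have hBwpos : 0 < ‖B w‖ := norm_pos_iff.mpr hBw
  have hρ : 0 < r / 2 := by positivity
  have hbound : ∀ n : ℕ, (n : ℝ) * ‖B w‖ ≤ (2 * ‖w‖ + 1) / (r / 2) := by
    intro n
    have hmaps : Set.MapsTo (f n) (Metric.ball 0 (r / 2))
        (Metric.ball (f n 0) (2 * ‖w‖ + 1)) := by
      intro ζ hζ
      have hζr : ‖ζ‖ < r := by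
        have : ‖ζ‖ < r / 2 := by simpa using hζ
        linarith
      rw [Metric.mem_ball, hfzero, dist_eq_norm]
      calc ‖f n ζ - w‖ ≤ ‖f n ζ‖ + ‖w‖ := norm_sub_le _ _
        _ = 2 * ‖w‖ := by rw [hfnorm n ζ hζr]; ring
        _ < 2 * ‖w‖ + 1 := by linarith
    have hS := Complex.norm_deriv_le_div_of_mapsTo_ball
      ((hfdiff n).differentiableOn) (hmaps.mono_right Metric.ball_subset_closedBall) hρ
    rw [(hfderiv n).deriv] at hS
    calc (n : ℝ) * ‖B w‖ = ‖(n : ℂ) • B w‖ := by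
          rw [norm_smul]; simp
      _ ≤ (2 * ‖w‖ + 1) / (r / 2) := hS
  obtain ⟨n, hn⟩ := exists_nat_gt ((2 * ‖w‖ + 1) / (r / 2) / ‖B w‖)
  have h1 := hbound n
  have h2 : (2 * ‖w‖ + 1) / (r / 2) < (n : ℝ) * ‖B w‖ := by
    rw [div_lt_iff₀ hBwpos] at hn
    linarith [hn]
  linarith
end

section
/- Let X be a complex Banach space and T : X^k → ℂ a continuous k-linear form. Then its Aron–Berner extension T̄ : (X'')^k → ℂ is slightly continuous: for every j, if ξ₁,…,ξ_{j−1} ∈ X and ξ_{j+1},…,ξ_k ∈ X'' are fixed, then T̄(ξ₁,…,ξ_j,…,ξ_k) depends weak-star continuously on ξ_j ∈ X''. -/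
/-!
Induction on `k`. If `j` is not the last index, the last argument stays fixed, so unfolding one
step of the recursion turns the claim into the same claim for the `(k-1)`-linear form
`ξ_k ∘ T(·,…,·,-)`. If `j` is the last index, all other arguments come from `X`, and since the
extension agrees with the form on `X^k`, the map `ζ ↦ T̄(x₁,…,x_{k-1},ζ)` is evaluation of `ζ` at
the fixed functional `T(x₁,…,x_{k-1},·) ∈ X'`, which is weak-star continuous by definition.
-/

open NormedSpace

variable {X : Type*} [NormedAddCommGroup X] [NormedSpace ℂ X]

/-- The Aron–Berner extension of a continuous `k`-linear form `T` on `X`, evaluated at a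
`k`-tuple of elements of the bidual `X''`.  It is defined recursively: for `k = 0` it is the
constant; for `k+1` one applies the last bidual argument to the linear form
`T(x₁,…,x_k,·) ∈ X'` (this is the second transpose construction) and extends the resulting
`k`-linear form. -/
noncomputable def abExt : (k : ℕ) →
    ContinuousMultilinearMap ℂ (fun _ : Fin k => X) ℂ →
    (Fin k → StrongDual ℂ (StrongDual ℂ X)) → ℂ
  | 0, T, _ => T Fin.elim0
  | (k + 1), T, ξ =>
      abExt k
        ((ξ (Fin.last k)).compContinuousMultilinearMap
          (continuousMultilinearCurryRightEquiv' ℂ k X ℂ T))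
        (fun i => ξ i.castSucc)

lemma abExt_inclusionInDoubleDual : ∀ (k : ℕ)
    (T : ContinuousMultilinearMap ℂ (fun _ : Fin k => X) ℂ) (x : Fin k → X),
    abExt k T (fun i => inclusionInDoubleDual ℂ X (x i)) = T x
  | 0, T, x => by
      rw [abExt, Subsingleton.elim x Fin.elim0]
  | (k + 1), T, x => by
      rw [abExt, abExt_inclusionInDoubleDual k _ (fun i => x i.castSucc)]
      simp only [ContinuousLinearMap.compContinuousMultilinearMap_coe, Function.comp_apply,
        dual_def, continuousMultilinearCurryRightEquiv_apply']
      exact congrArg T (Fin.snoc_init_self x)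

lemma abExt_succ_of_castSucc_eq_inclusionInDoubleDual {k : ℕ}
    (T : ContinuousMultilinearMap ℂ (fun _ : Fin (k + 1) => X) ℂ)
    (ξ : Fin (k + 1) → StrongDual ℂ (StrongDual ℂ X)) (x : Fin k → X)
    (hx : ∀ i, ξ i.castSucc = inclusionInDoubleDual ℂ X (x i)) :
    abExt (k + 1) T ξ = ξ (Fin.last k) (continuousMultilinearCurryRightEquiv' ℂ k X ℂ T x) := by
  rw [abExt, funext hx, abExt_inclusionInDoubleDual]
  rfl

lemma abExt_succ_update_castSucc {k : ℕ}
    (T : ContinuousMultilinearMap ℂ (fun _ : Fin (k + 1) => X) ℂ)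
    (ξ : Fin (k + 1) → StrongDual ℂ (StrongDual ℂ X)) (j : Fin k)
    (η : StrongDual ℂ (StrongDual ℂ X)) :
    abExt (k + 1) T (Function.update ξ j.castSucc η) =
      abExt k ((ξ (Fin.last k)).compContinuousMultilinearMap
          (continuousMultilinearCurryRightEquiv' ℂ k X ℂ T))
        (Function.update (fun i => ξ i.castSucc) j η) := by
  rw [abExt, Function.update_of_ne (Fin.castSucc_lt_last j).ne']
  exact congrArg _ (Function.update_comp_eq_of_injective ξ (Fin.castSucc_injective k) j η)

/-- The Aron–Berner extension `T̄ : (X'')^k → ℂ` of a continuous `k`-linear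
form `T : X^k → ℂ` is slightly continuous: for every `j`, if `ξ₁,…,ξ_{j−1} ∈ X` (i.e. are
canonical images of elements of `X`) and `ξ_{j+1},…,ξ_k ∈ X''` are fixed, then
`T̄(ξ₁,…,ξ_j,…,ξ_k)` depends weak-star continuously on `ξ_j ∈ X''`. -/
theorem stmt_4 {k : ℕ}
    (T : ContinuousMultilinearMap ℂ (fun _ : Fin k => X) ℂ)
    (j : Fin k) (ξ : Fin k → StrongDual ℂ (StrongDual ℂ X))
    (hbefore : ∀ i : Fin k, i < j → ∃ x : X, ξ i = inclusionInDoubleDual ℂ X x) :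
    Continuous fun ζ : WeakDual ℂ (StrongDual ℂ X) =>
      abExt k T (Function.update ξ j (WeakDual.toStrongDual ζ)) := by
  induction k with
  | zero => exact j.elim0
  | succ k ih =>
    rcases Fin.eq_castSucc_or_eq_last j with ⟨j, rfl⟩ | rfl
    · simp only [abExt_succ_update_castSucc]
      exact ih _ j _ fun i hi => hbefore i.castSucc (Fin.castSucc_lt_castSucc_iff.2 hi)
    · choose x hx using fun i : Fin k => hbefore i.castSucc (Fin.castSucc_lt_last i)
      have hinit : ∀ (η : StrongDual ℂ (StrongDual ℂ X)) (i : Fin k),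
          Function.update ξ (Fin.last k) η i.castSucc = inclusionInDoubleDual ℂ X (x i) :=
        fun η i => by rw [Function.update_of_ne (Fin.castSucc_lt_last i).ne, hx i]
      simp only [abExt_succ_of_castSucc_eq_inclusionInDoubleDual T _ x (hinit _),
        Function.update_self]
      exact WeakDual.eval_continuous _
end

section
/- Let X, Z be Banach spaces, W ⊂ X the open unit ball, c ∈ ℝ, and (𝔛_Π)_{Π} a directed family of closed subspaces of X (Π ranging over a directed set, with 𝔛_{Π'} ⊇ 𝔛_Π for Π' ≽ Π) whose union 𝔷 = ⋃_Π 𝔛_Π is dense in X. Suppose for each Π we are given a holomorphic h_Π : 𝔛_Π ∩ W → Z with ‖h_Π‖ ≤ c, compatible in the sense that h_{Π'} restricts to h_Π on 𝔛_Π ∩ W. Then there is a unique holomorphic h : W → Z with h|𝔛_Π ∩ W = h_Π for all Π, and ‖h‖ ≤ c. -/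
open Metric Set Filter Complex
open scoped Topology

section Aux
variable {Z : Type*} [NormedAddCommGroup Z] [NormedSpace ℂ Z]

lemma aux_dslope_bound {f : ℂ → Z} {R C : ℝ} (hR : 0 < R)
    (hd : DifferentiableOn ℂ f (ball 0 R))
    (hb : ∀ z ∈ ball (0:ℂ) R, ‖f z - f 0‖ ≤ C) :
    ∀ z ∈ ball (0:ℂ) R, ‖dslope f 0 z‖ ≤ C / R := by
  intro z hz
  refine _root_.le_of_forall_pos_le_add (fun ε hε => ?_)
  have maps : MapsTo f (ball 0 R) (ball (f 0) (C + ε * R)) := fun w hw => by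
    have h1 := hb w hw
    rw [mem_ball, dist_eq_norm]
    nlinarith
  have h2 := Complex.norm_dslope_le_div_of_mapsTo_ball hd (maps.mono_right ball_subset_closedBall) hz
  calc ‖dslope f 0 z‖ ≤ (C + ε * R) / R := h2
    _ = C / R + ε := by field_simp

lemma aux_sub_eq_smul_dslope (f : ℂ → Z) (z : ℂ) :
    f z - f 0 = z • dslope f 0 z := by
  rcases eq_or_ne z 0 with rfl | hz
  · simp
  · rw [dslope_of_ne _ hz, slope_def_module, smul_smul, sub_zero,
      mul_inv_cancel₀ hz, one_smul]

lemma aux_lip_bound {f : ℂ → Z} {R C : ℝ} (hR : 0 < R)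
    (hd : DifferentiableOn ℂ f (ball 0 R))
    (hb : ∀ z ∈ ball (0:ℂ) R, ‖f z - f 0‖ ≤ C) :
    ∀ z ∈ ball (0:ℂ) R, ‖f z - f 0‖ ≤ C / R * ‖z‖ := by
  intro z hz
  rw [aux_sub_eq_smul_dslope f z, norm_smul]
  rw [mul_comm]
  exact mul_le_mul (aux_dslope_bound hR hd hb z hz) le_rfl (norm_nonneg _)
    (div_nonneg (le_trans (norm_nonneg _) (hb 0 (by simp [hR]))) hR.le)

lemma aux_deriv_bound {f : ℂ → Z} {R C : ℝ} (hR : 0 < R)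
    (hd : DifferentiableOn ℂ f (ball 0 R))
    (hb : ∀ z ∈ ball (0:ℂ) R, ‖f z - f 0‖ ≤ C) :
    ‖deriv f 0‖ ≤ C / R := by
  have := aux_dslope_bound hR hd hb 0 (by simp [hR])
  rwa [dslope_same] at this

lemma aux_quad_bound [CompleteSpace Z] {f : ℂ → Z} {R C : ℝ} (hR : 0 < R)
    (hd : DifferentiableOn ℂ f (ball 0 R))
    (hb : ∀ z ∈ ball (0:ℂ) R, ‖f z - f 0‖ ≤ C)
    (h0 : deriv f 0 = 0) :
    ∀ z ∈ ball (0:ℂ) R, ‖f z - f 0‖ ≤ C / R ^ 2 * ‖z‖ ^ 2 := by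
  have hC : 0 ≤ C := le_trans (norm_nonneg _) (hb 0 (by simp [hR]))
  set g := dslope f 0 with hg
  have hgd : DifferentiableOn ℂ g (ball 0 R) :=
    (differentiableOn_dslope (ball_mem_nhds _ hR)).mpr hd
  have hg0 : g 0 = 0 := by rw [hg, dslope_same, h0]
  have hgb : ∀ z ∈ ball (0:ℂ) R, ‖g z - g 0‖ ≤ C / R := by
    intro z hz
    rw [hg0, sub_zero]
    exact aux_dslope_bound hR hd hb z hz
  intro z hz
  have h2 := aux_lip_bound hR hgd hgb z hz
  rw [hg0, sub_zero] at h2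
  rw [aux_sub_eq_smul_dslope f z, norm_smul]
  calc ‖z‖ * ‖g z‖ ≤ ‖z‖ * (C / R / R * ‖z‖) :=
        mul_le_mul_of_nonneg_left h2 (norm_nonneg _)
    _ = C / R ^ 2 * ‖z‖ ^ 2 := by ring

end Aux

set_option maxHeartbeats 2000000 in
/-- Let `X, Z` be Banach spaces, `W ⊂ X` the open unit ball, `c ∈ ℝ`, and
`(𝔛_Π)_Π` a directed family of closed subspaces of `X` whose union is dense in `X`.  Suppose
for each `Π` we are given a holomorphic `h_Π : 𝔛_Π ∩ W → Z` with `‖h_Π‖ ≤ c`, compatible under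
restriction.  Then there is a unique holomorphic `h : W → Z` with `h|𝔛_Π ∩ W = h_Π` for all
`Π`, and `‖h‖ ≤ c`.  (Holomorphy of `h_Π` on the subspace is expressed via
`DifferentiableWithinAt` along the set `𝔛_Π ∩ W ⊆ X`.) -/
theorem stmt_13
    {X Z : Type*} [NormedAddCommGroup X] [NormedSpace ℂ X] [CompleteSpace X]
    [NormedAddCommGroup Z] [NormedSpace ℂ Z] [CompleteSpace Z]
    {ι : Type*} [Preorder ι] [IsDirected ι (· ≤ ·)]
    (c : ℝ)
    (𝔛 : ι → Submodule ℂ X) (hclosed : ∀ i, IsClosed (𝔛 i : Set X))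
    (hmono : ∀ i j, i ≤ j → (𝔛 i : Set X) ⊆ 𝔛 j)
    (hdense : Dense (⋃ i, (𝔛 i : Set X)))
    (h : ι → X → Z)
    (hhol : ∀ i, DifferentiableOn ℂ (h i) ((𝔛 i : Set X) ∩ Metric.ball 0 1))
    (hbd : ∀ i, ∀ x ∈ (𝔛 i : Set X) ∩ Metric.ball 0 1, ‖h i x‖ ≤ c)
    (hcompat : ∀ i j, i ≤ j →
      Set.EqOn (h j) (h i) ((𝔛 i : Set X) ∩ Metric.ball 0 1)) :
    ∃ H : X → Z,
      DifferentiableOn ℂ H (Metric.ball 0 1) ∧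
      (∀ i, Set.EqOn H (h i) ((𝔛 i : Set X) ∩ Metric.ball 0 1)) ∧
      (∀ x ∈ Metric.ball (0 : X) 1, ‖H x‖ ≤ c) ∧
      ∀ H' : X → Z,
        DifferentiableOn ℂ H' (Metric.ball 0 1) →
        (∀ i, Set.EqOn H' (h i) ((𝔛 i : Set X) ∩ Metric.ball 0 1)) →
        Set.EqOn H' H (Metric.ball 0 1) := by
  classical
  rcases isEmpty_or_nonempty ι with hι | hι
  · exfalso
    rw [Set.iUnion_of_empty] at hdense
    obtain ⟨x, hx⟩ := hdense.nonempty
    exact hx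
  obtain ⟨i₀⟩ := hι
  have hc0 : 0 ≤ c :=
    le_trans (norm_nonneg _) (hbd i₀ 0 ⟨zero_mem _, by simp⟩)
  -- the union and the dense trace on the ball
  set 𝔷 : Set X := ⋃ i, (𝔛 i : Set X) with h𝔷
  set T : Set X := 𝔷 ∩ ball 0 1 with hT
  -- the glued function on the union
  set g₀ : X → Z := fun x => if hx : ∃ i, x ∈ (𝔛 i : Set X) then h hx.choose x else 0
    with hg₀def
  -- basic membership facts
  have hmem𝔷 : ∀ {i : ι} {x : X}, x ∈ (𝔛 i : Set X) → x ∈ 𝔷 := by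
    intro i x hx; exact Set.mem_iUnion.mpr ⟨i, hx⟩
  have hg₀ : ∀ i, ∀ x ∈ (𝔛 i : Set X) ∩ ball 0 1, g₀ x = h i x := by
    intro i x hx
    have hex : ∃ j, x ∈ (𝔛 j : Set X) := ⟨i, hx.1⟩
    rw [hg₀def]
    simp only [dif_pos hex]
    obtain ⟨k, hk1, hk2⟩ := directed_of (· ≤ ·) hex.choose i
    have e1 := hcompat hex.choose k hk1 ⟨hex.choose_spec, hx.2⟩
    have e2 := hcompat i k hk2 ⟨hx.1, hx.2⟩
    rw [← e1, e2]
  -- slice differentiability of each `h i`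
  have hslice : ∀ i, ∀ p w : X, p ∈ 𝔛 i → w ∈ 𝔛 i →
      DifferentiableOn ℂ (fun lam : ℂ => h i (p + lam • w)) {lam : ℂ | ‖p + lam • w‖ < 1} := by
    intro i p w hp hw lam hlam
    have hinner : Differentiable ℂ (fun lam : ℂ => p + lam • w) :=
      (differentiable_id.smul_const w).const_add p
    have hmemb : p + lam • w ∈ (𝔛 i : Set X) ∩ ball 0 1 :=
      ⟨(𝔛 i).add_mem hp ((𝔛 i).smul_mem lam hw), mem_ball_zero_iff.mpr hlam⟩
    have hmaps : MapsTo (fun lam : ℂ => p + lam • w) {lam : ℂ | ‖p + lam • w‖ < 1}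
        ((𝔛 i : Set X) ∩ ball 0 1) := fun mu hmu =>
      ⟨(𝔛 i).add_mem hp ((𝔛 i).smul_mem mu hw), mem_ball_zero_iff.mpr hmu⟩
    exact ((hhol i) _ hmemb).comp lam (hinner lam).differentiableWithinAt hmaps
  -- uniform Lipschitz estimate from the Schwarz lemma
  have hLip : ∀ r : ℝ, r < 1 → ∀ p ∈ 𝔷, ∀ q ∈ 𝔷, ‖p‖ ≤ r → ‖q‖ ≤ r →
      ‖g₀ p - g₀ q‖ ≤ 2 * c / (1 - r) * ‖p - q‖ := by
    intro r hr p hp q hq hpr hqr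
    have h1r : (0:ℝ) < 1 - r := by linarith
    obtain ⟨i, hi⟩ := Set.mem_iUnion.mp hp
    obtain ⟨j, hj⟩ := Set.mem_iUnion.mp hq
    obtain ⟨k, hik, hjk⟩ := directed_of (· ≤ ·) i j
    have hpk : p ∈ (𝔛 k : Set X) := hmono i k hik hi
    have hqk : q ∈ (𝔛 k : Set X) := hmono j k hjk hj
    have hpb : p ∈ ball (0:X) 1 := mem_ball_zero_iff.mpr (lt_of_le_of_lt hpr hr)
    have hqb : q ∈ ball (0:X) 1 := mem_ball_zero_iff.mpr (lt_of_le_of_lt hqr hr)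
    rw [hg₀ k p ⟨hpk, hpb⟩, hg₀ k q ⟨hqk, hqb⟩]
    rcases eq_or_ne p q with rfl | hne
    · simp only [sub_self, norm_zero]
      positivity
    have hqp : (0:ℝ) < ‖q - p‖ := by
      rw [norm_pos_iff, sub_ne_zero]; exact fun e => hne e.symm
    set R : ℝ := (1 - r) / ‖q - p‖ with hR
    have hRpos : 0 < R := div_pos h1r hqp
    set f : ℂ → Z := fun lam => h k (p + lam • (q - p)) with hf
    have hmem : ∀ lam : ℂ, lam ∈ ball (0:ℂ) R → ‖p + lam • (q - p)‖ < 1 := by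
      intro lam hlam
      rw [mem_ball_zero_iff] at hlam
      have : ‖p + lam • (q - p)‖ ≤ ‖p‖ + ‖lam‖ * ‖q - p‖ := by
        refine (norm_add_le _ _).trans ?_
        rw [norm_smul]
      have h2 : ‖lam‖ * ‖q - p‖ < R * ‖q - p‖ :=
        mul_lt_mul_of_pos_right hlam hqp
      have h3 : R * ‖q - p‖ = 1 - r := by
        rw [hR]; field_simp
      linarith
    have hdf : DifferentiableOn ℂ f (ball 0 R) :=
      (hslice k p (q - p) hpk ((𝔛 k).sub_mem hqk hpk)).mono
        (fun lam hlam => hmem lam hlam)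
    have hf0 : f 0 = h k p := by simp [hf]
    have hfb : ∀ lam ∈ ball (0:ℂ) R, ‖f lam - f 0‖ ≤ 2 * c := by
      intro lam hlam
      have h1 := hbd k (p + lam • (q - p))
        ⟨(𝔛 k).add_mem hpk ((𝔛 k).smul_mem lam ((𝔛 k).sub_mem hqk hpk)),
          mem_ball_zero_iff.mpr (hmem lam hlam)⟩
      have h2 := hbd k p ⟨hpk, hpb⟩
      rw [hf0]
      calc ‖f lam - h k p‖ ≤ ‖f lam‖ + ‖h k p‖ := norm_sub_le _ _
        _ ≤ 2 * c := by rw [hf]; dsimp only; linarith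
    have hpq : ‖p - q‖ = ‖q - p‖ := norm_sub_rev p q
    rcases lt_or_ge (‖q - p‖) (1 - r) with hcase | hcase
    · have h1R : (1:ℂ) ∈ ball (0:ℂ) R := by
        rw [mem_ball_zero_iff, norm_one, hR, lt_div_iff₀ hqp, one_mul]
        exact hcase
      have hlb := aux_lip_bound hRpos hdf hfb 1 h1R
      have hf1 : f 1 = h k q := by
        rw [hf]; dsimp only; rw [one_smul]; congr 1; abel
      rw [hf1, hf0, norm_one, mul_one] at hlb
      have hval : 2 * c / R = 2 * c / (1 - r) * ‖q - p‖ := by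
        rw [hR, div_div_eq_mul_div, div_mul_eq_mul_div]
      rw [hval] at hlb
      rw [hpq]
      calc ‖h k p - h k q‖ = ‖h k q - h k p‖ := norm_sub_rev _ _
        _ ≤ 2 * c / (1 - r) * ‖q - p‖ := hlb
    · have hb1 := hbd k p ⟨hpk, hpb⟩
      have hb2 := hbd k q ⟨hqk, hqb⟩
      have h2 : ‖h k p - h k q‖ ≤ 2 * c := by
        calc ‖h k p - h k q‖ ≤ ‖h k p‖ + ‖h k q‖ := norm_sub_le _ _
          _ ≤ 2 * c := by linarith
      rw [hpq]
      refine h2.trans ?_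
      rw [div_mul_eq_mul_div, le_div_iff₀ h1r]
      nlinarith
  -- density of T in the ball
  have hTd : ∀ x ∈ ball (0:X) 1, (𝓝[T] x).NeBot := by
    intro x hx
    refine mem_closure_iff_nhdsWithin_neBot.mp ?_
    rw [_root_.mem_closure_iff]
    intro U hU hxU
    obtain ⟨y, hy𝔷, hyU⟩ := hdense.exists_mem_open (hU.inter isOpen_ball) ⟨x, hxU, hx⟩
    exact ⟨y, hyU.1, hy𝔷, hyU.2⟩
  -- the extension
  set H : X → Z := fun x => limUnder (𝓝[T] x) g₀ with hHdef
  have htend : ∀ x ∈ ball (0:X) 1, Tendsto g₀ (𝓝[T] x) (𝓝 (H x)) := by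
    intro x hx
    haveI := hTd x hx
    apply tendsto_nhds_limUnder
    apply CompleteSpace.complete
    rw [Metric.cauchy_iff]
    refine ⟨Filter.NeBot.map (hTd x hx) _, ?_⟩
    intro ε hε
    have hx1 : ‖x‖ < 1 := mem_ball_zero_iff.mp hx
    set r : ℝ := (1 + ‖x‖) / 2 with hr
    have hxr : ‖x‖ < r := by rw [hr]; linarith
    have hr1 : r < 1 := by rw [hr]; linarith
    set K : ℝ := 2 * c / (1 - r) with hK
    have hK0 : 0 ≤ K := by
      rw [hK]; apply div_nonneg (by linarith) (by linarith)
    set δ : ℝ := min (ε / (2 * (K + 1))) (r - ‖x‖) with hδ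
    have hδ0 : 0 < δ := lt_min (by positivity) (by linarith)
    refine ⟨g₀ '' (T ∩ ball x δ), ?_, ?_⟩
    · exact image_mem_map
        (inter_mem self_mem_nhdsWithin (mem_nhdsWithin_of_mem_nhds (ball_mem_nhds x hδ0)))
    · rintro a ⟨p, ⟨⟨hp𝔷, hpb⟩, hpδ⟩, rfl⟩ b ⟨q, ⟨⟨hq𝔷, hqb⟩, hqδ⟩, rfl⟩
      have hpx : ‖p - x‖ < δ := by rwa [mem_ball, dist_eq_norm] at hpδ
      have hqx : ‖q - x‖ < δ := by rwa [mem_ball, dist_eq_norm] at hqδ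
      have hpr : ‖p‖ ≤ r := by
        have : ‖p‖ ≤ ‖p - x‖ + ‖x‖ := by simpa using norm_add_le (p - x) x
        have hδ2 : δ ≤ r - ‖x‖ := min_le_right _ _
        linarith
      have hqr : ‖q‖ ≤ r := by
        have : ‖q‖ ≤ ‖q - x‖ + ‖x‖ := by simpa using norm_add_le (q - x) x
        have hδ2 : δ ≤ r - ‖x‖ := min_le_right _ _
        linarith
      rw [dist_eq_norm]
      have hl := hLip r hr1 p hp𝔷 q hq𝔷 hpr hqr
      have hpq : ‖p - q‖ ≤ 2 * δ := by
        have : ‖p - q‖ ≤ ‖p - x‖ + ‖x - q‖ := by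
          simpa [dist_eq_norm] using dist_triangle p x q
        have h2 : ‖x - q‖ = ‖q - x‖ := norm_sub_rev _ _
        linarith
      have hδ1 : δ ≤ ε / (2 * (K + 1)) := min_le_left _ _
      calc ‖g₀ p - g₀ q‖ ≤ K * ‖p - q‖ := hl
        _ ≤ K * (2 * δ) := by
            exact mul_le_mul_of_nonneg_left hpq hK0
        _ < ε := by
            rw [le_div_iff₀ (by positivity : (0:ℝ) < 2 * (K + 1))] at hδ1
            nlinarith
  have hext : ∀ i, Set.EqOn H (h i) ((𝔛 i : Set X) ∩ ball 0 1) := by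
    intro i x hx
    haveI := hTd x hx.2
    have hx𝔷 : x ∈ 𝔷 := hmem𝔷 hx.1
    have hx1 : ‖x‖ < 1 := mem_ball_zero_iff.mp hx.2
    set r : ℝ := (1 + ‖x‖) / 2 with hr
    have hxr : ‖x‖ < r := by rw [hr]; linarith
    have hr1 : r < 1 := by rw [hr]; linarith
    set K : ℝ := 2 * c / (1 - r) with hK
    have hcont : Tendsto g₀ (𝓝[T] x) (𝓝 (g₀ x)) := by
      rw [← tendsto_sub_nhds_zero_iff]
      apply squeeze_zero_norm' (a := fun p => K * ‖p - x‖)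
      · filter_upwards [self_mem_nhdsWithin,
          mem_nhdsWithin_of_mem_nhds (ball_mem_nhds x (by linarith : (0:ℝ) < r - ‖x‖))]
          with p hpT hpball
        have hpx : ‖p - x‖ < r - ‖x‖ := by rwa [mem_ball, dist_eq_norm] at hpball
        have hpr : ‖p‖ ≤ r := by
          have : ‖p‖ ≤ ‖p - x‖ + ‖x‖ := by simpa using norm_add_le (p - x) x
          linarith
        exact hLip r hr1 p hpT.1 x hx𝔷 hpr hxr.le
      · have h1 : Tendsto (fun p : X => K * ‖p - x‖) (𝓝[T] x) (𝓝 (K * 0)) :=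
          ((tendsto_norm_sub_self x).mono_left nhdsWithin_le_nhds).const_mul K
        rwa [mul_zero] at h1
    have := tendsto_nhds_unique (htend x hx.2) hcont
    rw [this, hg₀ i x hx]
  have hHbd : ∀ x ∈ ball (0:X) 1, ‖H x‖ ≤ c := by
    intro x hx
    haveI := hTd x hx
    refine le_of_tendsto (htend x hx).norm ?_
    filter_upwards [self_mem_nhdsWithin] with p hp
    obtain ⟨j, hj⟩ := Set.mem_iUnion.mp hp.1
    rw [hg₀ j p ⟨hj, hp.2⟩]
    exact hbd j p ⟨hj, hp.2⟩
  have hHlip : ∀ r : ℝ, r < 1 → ∀ x y : X, ‖x‖ ≤ r → ‖y‖ ≤ r →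
      ‖H x - H y‖ ≤ 4 * c / (1 - r) * ‖x - y‖ := by
    intro r hr x y hxr hyr
    have hr0 : (0:ℝ) ≤ r := le_trans (norm_nonneg x) hxr
    set r' : ℝ := (1 + r) / 2 with hr'
    have hrr' : r < r' := by rw [hr']; linarith
    have hr'1 : r' < 1 := by rw [hr']; linarith
    set K : ℝ := 2 * c / (1 - r') with hK
    have hKval : K = 4 * c / (1 - r) := by
      rw [hK, hr']
      rw [show (1:ℝ) - (1 + r)/2 = (1 - r)/2 by ring]
      rw [div_div_eq_mul_div]
      ring
    have hK0 : 0 ≤ K := by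
      rw [hK]; apply div_nonneg (by linarith) (by linarith)
    have hxb : x ∈ ball (0:X) 1 := mem_ball_zero_iff.mpr (lt_of_le_of_lt hxr hr)
    have hyb : y ∈ ball (0:X) 1 := mem_ball_zero_iff.mpr (lt_of_le_of_lt hyr hr)
    haveI := hTd x hxb
    haveI := hTd y hyb
    rw [← hKval]
    refine _root_.le_of_forall_pos_le_add (fun ε hε => ?_)
    set ε' : ℝ := min (ε / (2 + 2 * K)) (r' - r) with hε'
    have hε'0 : 0 < ε' := lt_min (by positivity) (by linarith)
    have hev1 : ∀ᶠ p in 𝓝[T] x, ‖g₀ p - H x‖ < ε' ∧ ‖p - x‖ < ε' := by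
      have h1 := Metric.tendsto_nhds.mp (htend x hxb) ε' hε'0
      have h2 : ∀ᶠ p in 𝓝[T] x, ‖p - x‖ < ε' := by
        filter_upwards [mem_nhdsWithin_of_mem_nhds (ball_mem_nhds x hε'0)] with p hp
        rwa [mem_ball, dist_eq_norm] at hp
      filter_upwards [h1, h2] with p h1 h2
      rw [dist_eq_norm] at h1
      exact ⟨h1, h2⟩
    have hev2 : ∀ᶠ q in 𝓝[T] y, ‖g₀ q - H y‖ < ε' ∧ ‖q - y‖ < ε' := by
      have h1 := Metric.tendsto_nhds.mp (htend y hyb) ε' hε'0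
      have h2 : ∀ᶠ q in 𝓝[T] y, ‖q - y‖ < ε' := by
        filter_upwards [mem_nhdsWithin_of_mem_nhds (ball_mem_nhds y hε'0)] with q hq
        rwa [mem_ball, dist_eq_norm] at hq
      filter_upwards [h1, h2] with q h1 h2
      rw [dist_eq_norm] at h1
      exact ⟨h1, h2⟩
    obtain ⟨p, ⟨hp1, hp2⟩, hpT⟩ := (hev1.and self_mem_nhdsWithin).exists
    obtain ⟨q, ⟨hq1, hq2⟩, hqT⟩ := (hev2.and self_mem_nhdsWithin).exists
    have hpr' : ‖p‖ ≤ r' := by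
      have h1 : ‖p‖ ≤ ‖p - x‖ + ‖x‖ := by simpa using norm_add_le (p - x) x
      have h2 : ε' ≤ r' - r := min_le_right _ _
      linarith
    have hqr' : ‖q‖ ≤ r' := by
      have h1 : ‖q‖ ≤ ‖q - y‖ + ‖y‖ := by simpa using norm_add_le (q - y) y
      have h2 : ε' ≤ r' - r := min_le_right _ _
      linarith
    have hmid := hLip r' hr'1 p hpT.1 q hqT.1 hpr' hqr'
    have hpq : ‖p - q‖ ≤ ‖x - y‖ + 2 * ε' := by
      have h1 : ‖p - q‖ ≤ ‖p - x‖ + ‖x - y‖ + ‖y - q‖ := by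
        simpa [dist_eq_norm] using dist_triangle4 p x y q
      have h2 : ‖y - q‖ = ‖q - y‖ := norm_sub_rev _ _
      linarith
    have hεK : ε' ≤ ε / (2 + 2 * K) := min_le_left _ _
    have hfinal : ‖H x - H y‖ ≤ ‖H x - g₀ p‖ + ‖g₀ p - g₀ q‖ + ‖g₀ q - H y‖ := by
      simpa [dist_eq_norm] using dist_triangle4 (H x) (g₀ p) (g₀ q) (H y)
    have hs1 : ‖H x - g₀ p‖ = ‖g₀ p - H x‖ := norm_sub_rev _ _
    have : (2 + 2 * K) * ε' ≤ ε := by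
      rw [le_div_iff₀ (by positivity : (0:ℝ) < 2 + 2 * K)] at hεK
      linarith [hεK]
    calc ‖H x - H y‖ ≤ ‖H x - g₀ p‖ + ‖g₀ p - g₀ q‖ + ‖g₀ q - H y‖ := hfinal
      _ ≤ ε' + (K * (‖x - y‖ + 2 * ε')) + ε' := by
          rw [hs1]
          have := mul_le_mul_of_nonneg_left hpq hK0
          have h3 := hmid.trans this
          linarith
      _ = K * ‖x - y‖ + (2 + 2 * K) * ε' := by ring
      _ ≤ K * ‖x - y‖ + ε := by linarith [this]
  -- approximating sequences
  have hseq : ∀ x u : X, ∃ (k : ℕ → ι) (p w : ℕ → X),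
      (∀ n, p n ∈ 𝔛 (k n)) ∧ (∀ n, w n ∈ 𝔛 (k n)) ∧
      Tendsto p atTop (𝓝 x) ∧ Tendsto w atTop (𝓝 u) := by
    intro x u
    have hex : ∀ n : ℕ, ∃ (k : ι) (p w : X), p ∈ 𝔛 k ∧ w ∈ 𝔛 k ∧
        ‖p - x‖ < 1 / (n + 1) ∧ ‖w - u‖ < 1 / (n + 1) := by
      intro n
      have hpos : (0:ℝ) < 1 / (n + 1) := by positivity
      obtain ⟨p, hp𝔷, hpx⟩ := Metric.mem_closure_iff.mp (hdense x) _ hpos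
      obtain ⟨w, hw𝔷, hwu⟩ := Metric.mem_closure_iff.mp (hdense u) _ hpos
      obtain ⟨i, hi⟩ := Set.mem_iUnion.mp hp𝔷
      obtain ⟨j, hj⟩ := Set.mem_iUnion.mp hw𝔷
      obtain ⟨k, hik, hjk⟩ := directed_of (· ≤ ·) i j
      exact ⟨k, p, w, hmono i k hik hi, hmono j k hjk hj,
        by rwa [← dist_eq_norm, dist_comm], by rwa [← dist_eq_norm, dist_comm]⟩
    choose k p w hp hw hpx hwu using hex
    refine ⟨k, p, w, hp, hw, ?_, ?_⟩
    · rw [← tendsto_sub_nhds_zero_iff]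
      exact squeeze_zero_norm (fun n => (hpx n).le) tendsto_one_div_add_atTop_nhds_zero_nat
    · rw [← tendsto_sub_nhds_zero_iff]
      exact squeeze_zero_norm (fun n => (hwu n).le) tendsto_one_div_add_atTop_nhds_zero_nat
  -- the key approximation estimate for slices
  have hkey : ∀ (x u : X) (lam₀ : ℂ) (ρ r : ℝ), 0 < ρ → r < 1 →
      (∀ lam : ℂ, lam ∈ closedBall lam₀ ρ → ‖x + lam • u‖ ≤ r) →
      ∀ (k : ℕ → ι) (p w : ℕ → X),
      (∀ n, p n ∈ 𝔛 (k n)) → (∀ n, w n ∈ 𝔛 (k n)) →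
      Tendsto p atTop (𝓝 x) → Tendsto w atTop (𝓝 u) →
      TendstoUniformlyOn (fun n lam => h (k n) (p n + lam • w n))
        (fun lam => H (x + lam • u)) atTop (closedBall lam₀ ρ) ∧
      (∀ᶠ n in atTop, DifferentiableOn ℂ (fun lam : ℂ => h (k n) (p n + lam • w n))
        (ball lam₀ ρ)) := by
    intro x u lam₀ ρ r hρ0 hr1 hball k p w hpmem hwmem hpx hwu
    set r₂ : ℝ := (1 + r) / 2 with hr₂
    have hr0 : (0:ℝ) ≤ r := le_trans (norm_nonneg _) (hball lam₀ (mem_closedBall_self hρ0.le))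
    have hrr₂ : r < r₂ := by rw [hr₂]; linarith
    have hr₂1 : r₂ < 1 := by rw [hr₂]; linarith
    set K₂ : ℝ := 4 * c / (1 - r₂) with hK₂
    have hK₂0 : 0 ≤ K₂ := by rw [hK₂]; apply div_nonneg (by linarith) (by linarith)
    set E : ℕ → ℝ := fun n => ‖p n - x‖ + (‖lam₀‖ + ρ) * ‖w n - u‖ with hE
    have hE0 : ∀ n, 0 ≤ E n := fun n => by
      have := norm_nonneg (p n - x); have := norm_nonneg (w n - u); positivity
    have hEt : Tendsto E atTop (𝓝 0) := by
      have t1 : Tendsto (fun n => ‖p n - x‖) atTop (𝓝 0) :=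
        tendsto_iff_norm_sub_tendsto_zero.mp hpx
      have t2 : Tendsto (fun n => ‖w n - u‖) atTop (𝓝 0) :=
        tendsto_iff_norm_sub_tendsto_zero.mp hwu
      have := t1.add (t2.const_mul (‖lam₀‖ + ρ))
      simpa using this
    have hEbound : ∀ n, ∀ lam : ℂ, lam ∈ closedBall lam₀ ρ →
        ‖(p n + lam • w n) - (x + lam • u)‖ ≤ E n := by
      intro n lam hlam
      have hlamn : ‖lam‖ ≤ ‖lam₀‖ + ρ := by
        have h1 : ‖lam - lam₀‖ ≤ ρ := by rwa [mem_closedBall, dist_eq_norm] at hlam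
        have h2 : ‖lam‖ ≤ ‖lam - lam₀‖ + ‖lam₀‖ := by
          simpa using norm_add_le (lam - lam₀) lam₀
        linarith
      have heq : (p n + lam • w n) - (x + lam • u) = (p n - x) + lam • (w n - u) := by
        rw [smul_sub]; abel
      rw [heq]
      refine (norm_add_le _ _).trans ?_
      rw [norm_smul, hE]
      have := mul_le_mul_of_nonneg_right hlamn (norm_nonneg (w n - u))
      dsimp only
      linarith
    have hsmall : ∀ᶠ n in atTop, E n < r₂ - r := by
      exact hEt.eventually_lt_const (by linarith)
    have hnormb : ∀ n, E n < r₂ - r → ∀ lam : ℂ, lam ∈ closedBall lam₀ ρ →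
        ‖p n + lam • w n‖ < r₂ := by
      intro n hn lam hlam
      have h1 := hEbound n lam hlam
      have h2 := hball lam hlam
      have h3 : ‖p n + lam • w n‖ ≤ ‖(p n + lam • w n) - (x + lam • u)‖ + ‖x + lam • u‖ := by
        simpa using norm_add_le ((p n + lam • w n) - (x + lam • u)) (x + lam • u)
      linarith
    constructor
    · rw [Metric.tendstoUniformlyOn_iff]
      intro ε hε
      have hev := hEt.eventually_lt_const
        (show (0:ℝ) < min (r₂ - r) (ε / (K₂ + 1)) from lt_min (by linarith) (by positivity))
      filter_upwards [hev] with n hn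
      intro lam hlam
      have hn1 : E n < r₂ - r := lt_of_lt_of_le hn (min_le_left _ _)
      have hn2 : E n < ε / (K₂ + 1) := lt_of_lt_of_le hn (min_le_right _ _)
      have hb1 : ‖p n + lam • w n‖ < r₂ := hnormb n hn1 lam hlam
      have hmem2 : p n + lam • w n ∈ (𝔛 (k n) : Set X) ∩ ball 0 1 :=
        ⟨(𝔛 (k n)).add_mem (hpmem n) ((𝔛 (k n)).smul_mem lam (hwmem n)),
          mem_ball_zero_iff.mpr (lt_trans hb1 hr₂1)⟩
      rw [dist_eq_norm, ← hext (k n) hmem2]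
      have hlip := hHlip r₂ hr₂1 (x + lam • u) (p n + lam • w n)
        ((hball lam hlam).trans hrr₂.le) hb1.le
      have htri : ‖(x + lam • u) - (p n + lam • w n)‖ ≤ E n := by
        rw [norm_sub_rev]; exact hEbound n lam hlam
      have : K₂ * ‖(x + lam • u) - (p n + lam • w n)‖ ≤ K₂ * E n :=
        mul_le_mul_of_nonneg_left htri hK₂0
      have hfin : K₂ * E n < ε := by
        rw [lt_div_iff₀ (by positivity : (0:ℝ) < K₂ + 1)] at hn2
        nlinarith [hE0 n]
      calc ‖H (x + lam • u) - H (p n + lam • w n)‖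
          ≤ K₂ * ‖(x + lam • u) - (p n + lam • w n)‖ := hlip
        _ < ε := lt_of_le_of_lt this hfin
    · filter_upwards [hsmall] with n hn
      refine (hslice (k n) (p n) (w n) (hpmem n) (hwmem n)).mono ?_
      intro lam hlam
      exact lt_trans (hnormb n hn lam (ball_subset_closedBall hlam)) hr₂1
  -- slices of H are holomorphic
  have hHslice : ∀ x u : X, DifferentiableOn ℂ (fun lam : ℂ => H (x + lam • u))
      {lam : ℂ | ‖x + lam • u‖ < 1} := by
    intro x u lam₀ hlam₀
    simp only [mem_setOf_eq] at hlam₀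
    set a : ℝ := ‖x + lam₀ • u‖ with ha
    have ha1 : a < 1 := hlam₀
    have ha0 : 0 ≤ a := norm_nonneg _
    set ρ : ℝ := (1 - a) / (4 * (‖u‖ + 1)) with hρ
    have hρ0 : 0 < ρ := by
      rw [hρ]; apply div_pos (by linarith) (by positivity)
    set r : ℝ := (1 + a) / 2 with hr
    have hr1 : r < 1 := by rw [hr]; linarith
    have hball : ∀ lam : ℂ, lam ∈ closedBall lam₀ ρ → ‖x + lam • u‖ ≤ r := by
      intro lam hlam
      have h2 : ‖lam - lam₀‖ ≤ ρ := by rwa [mem_closedBall, dist_eq_norm] at hlam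
      have h1 : ‖x + lam • u‖ ≤ a + ‖lam - lam₀‖ * ‖u‖ := by
        have heq : x + lam • u = (x + lam₀ • u) + (lam - lam₀) • u := by
          rw [sub_smul]; abel
        rw [heq]
        refine (norm_add_le _ _).trans ?_
        rw [norm_smul, ha]
      have h3 : ‖lam - lam₀‖ * ‖u‖ ≤ ρ * ‖u‖ :=
        mul_le_mul_of_nonneg_right h2 (norm_nonneg u)
      have h4 : ρ * ‖u‖ ≤ (1 - a) / 4 := by
        rw [hρ, div_mul_eq_mul_div, div_le_div_iff₀ (by positivity) (by norm_num : (0:ℝ) < 4)]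
        nlinarith [norm_nonneg u]
      rw [hr]; linarith
    obtain ⟨k, p, w, hpmem, hwmem, hpx, hwu⟩ := hseq x u
    obtain ⟨hUnif, hDiff⟩ := hkey x u lam₀ ρ r hρ0 hr1 hball k p w hpmem hwmem hpx hwu
    have hloc : TendstoLocallyUniformlyOn (fun n lam => h (k n) (p n + lam • w n))
        (fun lam => H (x + lam • u)) atTop (ball lam₀ ρ) :=
      hUnif.tendstoLocallyUniformlyOn.mono ball_subset_closedBall
    have hd : DifferentiableOn ℂ (fun lam : ℂ => H (x + lam • u)) (ball lam₀ ρ) :=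
      hloc.differentiableOn hDiff isOpen_ball
    exact ((hd.differentiableAt (isOpen_ball.mem_nhds (mem_ball_self hρ0))).differentiableWithinAt)
  -- joint approximating sequences
  have hseq3 : ∀ x u v : X, ∃ (k : ℕ → ι) (p w w' : ℕ → X),
      (∀ n, p n ∈ 𝔛 (k n)) ∧ (∀ n, w n ∈ 𝔛 (k n)) ∧ (∀ n, w' n ∈ 𝔛 (k n)) ∧
      Tendsto p atTop (𝓝 x) ∧ Tendsto w atTop (𝓝 u) ∧ Tendsto w' atTop (𝓝 v) := by
    intro x u v
    have hex : ∀ n : ℕ, ∃ (k : ι) (p w w' : X), p ∈ 𝔛 k ∧ w ∈ 𝔛 k ∧ w' ∈ 𝔛 k ∧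
        ‖p - x‖ < 1 / (n + 1) ∧ ‖w - u‖ < 1 / (n + 1) ∧ ‖w' - v‖ < 1 / (n + 1) := by
      intro n
      have hpos : (0:ℝ) < 1 / (n + 1) := by positivity
      obtain ⟨p, hp𝔷, hpx⟩ := Metric.mem_closure_iff.mp (hdense x) _ hpos
      obtain ⟨w, hw𝔷, hwu⟩ := Metric.mem_closure_iff.mp (hdense u) _ hpos
      obtain ⟨w', hw'𝔷, hw'v⟩ := Metric.mem_closure_iff.mp (hdense v) _ hpos
      obtain ⟨i, hi⟩ := Set.mem_iUnion.mp hp𝔷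
      obtain ⟨j, hj⟩ := Set.mem_iUnion.mp hw𝔷
      obtain ⟨l, hl⟩ := Set.mem_iUnion.mp hw'𝔷
      obtain ⟨m, him, hjm⟩ := directed_of (· ≤ ·) i j
      obtain ⟨k, hmk, hlk⟩ := directed_of (· ≤ ·) m l
      exact ⟨k, p, w, w', hmono i k (le_trans him hmk) hi,
        hmono j k (le_trans hjm hmk) hj, hmono l k hlk hl,
        by rwa [← dist_eq_norm, dist_comm], by rwa [← dist_eq_norm, dist_comm],
        by rwa [← dist_eq_norm, dist_comm]⟩
    choose k p w w' h1 h2 h3 h4 h5 h6 using hex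
    refine ⟨k, p, w, w', h1, h2, h3, ?_, ?_, ?_⟩
    · rw [← tendsto_sub_nhds_zero_iff]
      exact squeeze_zero_norm (fun n => (h4 n).le) tendsto_one_div_add_atTop_nhds_zero_nat
    · rw [← tendsto_sub_nhds_zero_iff]
      exact squeeze_zero_norm (fun n => (h5 n).le) tendsto_one_div_add_atTop_nhds_zero_nat
    · rw [← tendsto_sub_nhds_zero_iff]
      exact squeeze_zero_norm (fun n => (h6 n).le) tendsto_one_div_add_atTop_nhds_zero_nat
  -- chain rule on the subspaces
  have hchain : ∀ (i : ι) (p₀ w₀ : X), p₀ ∈ 𝔛 i → w₀ ∈ 𝔛 i → ‖p₀‖ < 1 →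
      HasDerivAt (fun lam : ℂ => h i (p₀ + lam • w₀))
        (fderivWithin ℂ (h i) ((𝔛 i : Set X) ∩ ball 0 1) p₀ w₀) 0 := by
    intro i p₀ w₀ hp₀ hw₀ hp₀1
    have hD : HasFDerivWithinAt (h i) (fderivWithin ℂ (h i) ((𝔛 i : Set X) ∩ ball 0 1) p₀)
        ((𝔛 i : Set X) ∩ ball 0 1) p₀ :=
      (hhol i p₀ ⟨hp₀, mem_ball_zero_iff.mpr hp₀1⟩).hasFDerivWithinAt
    have hinner : HasDerivAt (fun lam : ℂ => p₀ + lam • w₀) w₀ 0 := by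
      have h1 : HasDerivAt (fun lam : ℂ => lam • w₀) ((1:ℂ) • w₀) 0 :=
        (hasDerivAt_id (0:ℂ)).smul_const w₀
      rw [one_smul] at h1
      exact h1.const_add p₀
    set Ω : Set ℂ := (fun lam : ℂ => p₀ + lam • w₀) ⁻¹' ball 0 1 with hΩ
    have hΩopen : IsOpen Ω := by
      refine IsOpen.preimage ?_ isOpen_ball
      exact continuous_const.add (continuous_id.smul continuous_const)
    have h0Ω : (0:ℂ) ∈ Ω := by
      simp only [hΩ, Set.mem_preimage, zero_smul, add_zero]
      exact mem_ball_zero_iff.mpr hp₀1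
    have hmaps : MapsTo (fun lam : ℂ => p₀ + lam • w₀) Ω ((𝔛 i : Set X) ∩ ball 0 1) :=
      fun lam hlam => ⟨(𝔛 i).add_mem hp₀ ((𝔛 i).smul_mem lam hw₀), hlam⟩
    have hD' : HasFDerivWithinAt (h i) (fderivWithin ℂ (h i) ((𝔛 i : Set X) ∩ ball 0 1) p₀)
        ((𝔛 i : Set X) ∩ ball 0 1) ((fun lam : ℂ => p₀ + lam • w₀) 0) := by
      simpa using hD
    have hcomp := hD'.comp_hasDerivWithinAt (0:ℂ) (hinner.hasDerivWithinAt (s := Ω)) hmaps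
    exact hcomp.hasDerivAt (hΩopen.mem_nhds h0Ω)
  -- H is Fréchet differentiable on the ball
  have hHdiff : ∀ x₀ ∈ ball (0:X) 1, DifferentiableAt ℂ H x₀ := by
    intro x₀ hx₀
    have hx₀1 : ‖x₀‖ < 1 := mem_ball_zero_iff.mp hx₀
    set a : ℝ := ‖x₀‖ with ha
    have ha0 : 0 ≤ a := norm_nonneg _
    set r : ℝ := (1 + a) / 2 with hr
    have hrs : a < r := by rw [hr]; linarith
    have hr1 : r < 1 := by rw [hr]; linarith
    set ρ₀ : ℝ := (1 - a) / 2 with hρ₀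
    have hρ₀0 : 0 < ρ₀ := by rw [hρ₀]; linarith
    have har : a + ρ₀ = r := by rw [hρ₀, hr]; ring
    set K₂ : ℝ := 4 * c / (1 - r) with hK₂
    have hK₂0 : 0 ≤ K₂ := by rw [hK₂]; apply div_nonneg (by linarith) (by linarith)
    have hsliceAt : ∀ u : X, DifferentiableAt ℂ (fun lam : ℂ => H (x₀ + lam • u)) 0 := by
      intro u
      have hopen : IsOpen {lam : ℂ | ‖x₀ + lam • u‖ < 1} := by
        refine isOpen_lt ?_ continuous_const
        exact (continuous_const.add (continuous_id.smul continuous_const)).norm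
      have h0 : (0:ℂ) ∈ {lam : ℂ | ‖x₀ + lam • u‖ < 1} := by
        simp only [Set.mem_setOf_eq, zero_smul, add_zero]
        exact hx₀1
      exact (hHslice x₀ u).differentiableAt (hopen.mem_nhds h0)
    set T₀ : X → Z := fun u => deriv (fun lam : ℂ => H (x₀ + lam • u)) 0 with hT₀
    have hT₀zero : T₀ 0 = 0 := by
      have heq : (fun lam : ℂ => H (x₀ + lam • (0:X))) = fun _ => H x₀ := by
        funext lam; simp
      simp only [hT₀, heq, deriv_const']
    have hsliceball : ∀ u : X, u ≠ 0 → ∀ lam : ℂ, lam ∈ ball (0:ℂ) (ρ₀ / ‖u‖) →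
        ‖x₀ + lam • u‖ < r := by
      intro u hu lam hlam
      have hw0 : 0 < ‖u‖ := norm_pos_iff.mpr hu
      have h2 : ‖lam‖ < ρ₀ / ‖u‖ := mem_ball_zero_iff.mp hlam
      have h1 : ‖x₀ + lam • u‖ ≤ a + ‖lam‖ * ‖u‖ := by
        refine (norm_add_le _ _).trans ?_; rw [norm_smul, ha]
      have h3 : ‖lam‖ * ‖u‖ < ρ₀ := by
        rw [lt_div_iff₀ hw0] at h2; exact h2
      linarith
    have hsliceDiff : ∀ u : X, u ≠ 0 →
        DifferentiableOn ℂ (fun lam : ℂ => H (x₀ + lam • u)) (ball 0 (ρ₀ / ‖u‖)) := by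
      intro u hu
      exact (hHslice x₀ u).mono (fun lam hlam => lt_trans (hsliceball u hu lam hlam) hr1)
    have hsliceLip : ∀ u : X, u ≠ 0 → ∀ lam : ℂ, lam ∈ ball (0:ℂ) (ρ₀ / ‖u‖) →
        ‖H (x₀ + lam • u) - H x₀‖ ≤ K₂ * (‖lam‖ * ‖u‖) := by
      intro u hu lam hlam
      have h1 := hHlip r hr1 (x₀ + lam • u) x₀ (hsliceball u hu lam hlam).le hrs.le
      have h2 : x₀ + lam • u - x₀ = lam • u := by abel
      rw [h2, norm_smul] at h1
      rw [← hK₂] at h1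
      exact h1
    have hT₀bd : ∀ u : X, ‖T₀ u‖ ≤ K₂ * ‖u‖ := by
      intro u
      rcases eq_or_ne u 0 with rfl | hu
      · rw [hT₀zero]; simp
      · have hw0 : 0 < ‖u‖ := norm_pos_iff.mpr hu
        have hP0 : 0 < ρ₀ / ‖u‖ := by positivity
        have hb2 : ∀ lam ∈ ball (0:ℂ) (ρ₀ / ‖u‖),
            ‖H (x₀ + lam • u) - H (x₀ + (0:ℂ) • u)‖ ≤ K₂ * ρ₀ := by
          intro lam hlam
          have h1 := hsliceLip u hu lam hlam
          have h2 : ‖lam‖ * ‖u‖ ≤ ρ₀ := by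
            have := mem_ball_zero_iff.mp hlam
            rw [lt_div_iff₀ hw0] at this
            exact this.le
          have h3 : K₂ * (‖lam‖ * ‖u‖) ≤ K₂ * ρ₀ := mul_le_mul_of_nonneg_left h2 hK₂0
          simp only [zero_smul, add_zero]
          linarith
        have hd := aux_deriv_bound hP0 (hsliceDiff u hu) hb2
        have heq : K₂ * ρ₀ / (ρ₀ / ‖u‖) = K₂ * ‖u‖ := by
          field_simp
        rw [heq] at hd
        exact hd
    -- convergence of the subspace derivatives
    have hconv : ∀ (u : X) (k : ℕ → ι) (p w : ℕ → X),
        (∀ n, p n ∈ 𝔛 (k n)) → (∀ n, w n ∈ 𝔛 (k n)) →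
        Tendsto p atTop (𝓝 x₀) → Tendsto w atTop (𝓝 u) →
        Tendsto (fun n => deriv (fun lam : ℂ => h (k n) (p n + lam • w n)) 0)
          atTop (𝓝 (T₀ u)) := by
      intro u k p w hpmem hwmem hpx hwu
      set ρ : ℝ := ρ₀ / (2 * (‖u‖ + 1)) with hρd
      have hρ0 : 0 < ρ := by rw [hρd]; positivity
      have hball : ∀ lam : ℂ, lam ∈ closedBall (0:ℂ) ρ → ‖x₀ + lam • u‖ ≤ r := by
        intro lam hlam
        have h2 : ‖lam‖ ≤ ρ := by rwa [mem_closedBall, dist_eq_norm, sub_zero] at hlam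
        have h1 : ‖x₀ + lam • u‖ ≤ a + ‖lam‖ * ‖u‖ := by
          refine (norm_add_le _ _).trans ?_; rw [norm_smul, ha]
        have h3 : ‖lam‖ * ‖u‖ ≤ ρ * ‖u‖ := mul_le_mul_of_nonneg_right h2 (norm_nonneg u)
        have h4 : ρ * ‖u‖ ≤ ρ₀ / 2 := by
          rw [hρd, div_mul_eq_mul_div, div_le_div_iff₀ (by positivity) (by norm_num : (0:ℝ) < 2)]
          nlinarith [norm_nonneg u, hρ₀0]
        linarith
      obtain ⟨hUnif, hDiff⟩ := hkey x₀ u 0 ρ r hρ0 hr1 hball k p w hpmem hwmem hpx hwu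
      have hψd : DifferentiableOn ℂ (fun lam : ℂ => H (x₀ + lam • u)) (ball 0 ρ) := by
        refine (hHslice x₀ u).mono (fun lam hlam => ?_)
        exact lt_of_le_of_lt (hball lam (ball_subset_closedBall hlam)) hr1
      rw [Metric.tendsto_nhds]
      intro ε hε
      rw [Metric.tendstoUniformlyOn_iff] at hUnif
      filter_upwards [hUnif (ε * ρ / 4) (by positivity), hDiff] with n hUn hDn
      have hdd : DifferentiableOn ℂ
          (fun lam : ℂ => h (k n) (p n + lam • w n) - H (x₀ + lam • u)) (ball 0 ρ) :=
        hDn.sub hψd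
      have hdb : ∀ lam ∈ ball (0:ℂ) ρ,
          ‖(h (k n) (p n + lam • w n) - H (x₀ + lam • u)) -
            (h (k n) (p n + (0:ℂ) • w n) - H (x₀ + (0:ℂ) • u))‖ ≤ ε * ρ / 2 := by
        intro lam hlam
        have h1 := hUn lam (ball_subset_closedBall hlam)
        have h2 := hUn 0 (mem_closedBall_self hρ0.le)
        rw [dist_eq_norm] at h1 h2
        have e1 : ‖h (k n) (p n + lam • w n) - H (x₀ + lam • u)‖ < ε * ρ / 4 := by
          rw [norm_sub_rev]; exact h1
        have e2 : ‖h (k n) (p n + (0:ℂ) • w n) - H (x₀ + (0:ℂ) • u)‖ < ε * ρ / 4 := by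
          rw [norm_sub_rev]; exact h2
        calc ‖(h (k n) (p n + lam • w n) - H (x₀ + lam • u)) -
              (h (k n) (p n + (0:ℂ) • w n) - H (x₀ + (0:ℂ) • u))‖
            ≤ ‖h (k n) (p n + lam • w n) - H (x₀ + lam • u)‖ +
              ‖h (k n) (p n + (0:ℂ) • w n) - H (x₀ + (0:ℂ) • u)‖ := norm_sub_le _ _
          _ ≤ ε * ρ / 2 := by linarith
      have hder := aux_deriv_bound hρ0 hdd hdb
      have hg0 : DifferentiableAt ℂ (fun lam : ℂ => h (k n) (p n + lam • w n)) 0 :=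
        hDn.differentiableAt (isOpen_ball.mem_nhds (mem_ball_self hρ0))
      have hψ0 : DifferentiableAt ℂ (fun lam : ℂ => H (x₀ + lam • u)) 0 := hsliceAt u
      have hds : deriv (fun lam : ℂ => h (k n) (p n + lam • w n) - H (x₀ + lam • u)) 0
          = deriv (fun lam : ℂ => h (k n) (p n + lam • w n)) 0 - T₀ u := by
        rw [deriv_fun_sub hg0 hψ0]
      rw [hds] at hder
      have heq2 : ε * ρ / 2 / ρ = ε / 2 := by field_simp
      rw [heq2] at hder
      rw [dist_eq_norm]
      calc ‖deriv (fun lam : ℂ => h (k n) (p n + lam • w n)) 0 - T₀ u‖ ≤ ε / 2 := hder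
        _ < ε := by linarith
    -- eventual membership of the approximating points in the ball
    have hevball : ∀ (p : ℕ → X), Tendsto p atTop (𝓝 x₀) → ∀ᶠ n in atTop, ‖p n‖ < 1 := by
      intro p hpx
      have h1 : ∀ᶠ y : X in 𝓝 x₀, ‖y‖ < 1 := by
        have := (continuous_norm.tendsto x₀).eventually_lt_const hx₀1
        exact this
      exact hpx.eventually h1
    -- additivity
    have hadd : ∀ u v : X, T₀ (u + v) = T₀ u + T₀ v := by
      intro u v
      obtain ⟨k, p, w, w', hpmem, hwmem, hw'mem, hpx, hwu, hw'v⟩ := hseq3 x₀ u v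
      have t1 := hconv u k p w hpmem hwmem hpx hwu
      have t2 := hconv v k p w' hpmem hw'mem hpx hw'v
      have t3 := hconv (u + v) k p (fun n => w n + w' n) hpmem
        (fun n => (𝔛 (k n)).add_mem (hwmem n) (hw'mem n)) hpx (hwu.add hw'v)
      have t4 : Tendsto (fun n => deriv (fun lam : ℂ => h (k n) (p n + lam • (w n + w' n))) 0)
          atTop (𝓝 (T₀ u + T₀ v)) := by
        refine (t1.add t2).congr' ?_
        filter_upwards [hevball p hpx] with n hn
        have hc1 := (hchain (k n) (p n) (w n) (hpmem n) (hwmem n) hn).deriv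
        have hc2 := (hchain (k n) (p n) (w' n) (hpmem n) (hw'mem n) hn).deriv
        have hc3 := (hchain (k n) (p n) (w n + w' n) (hpmem n)
          ((𝔛 (k n)).add_mem (hwmem n) (hw'mem n)) hn).deriv
        rw [hc1, hc2, hc3, map_add]
      exact (tendsto_nhds_unique t3 t4)
    -- homogeneity
    have hsmul : ∀ (b : ℂ) (u : X), T₀ (b • u) = b • T₀ u := by
      intro b u
      rcases eq_or_ne b 0 with rfl | hb
      · rw [zero_smul, hT₀zero, zero_smul]
      · have hg : HasDerivAt (fun lam : ℂ => H (x₀ + lam • u))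
            (deriv (fun lam : ℂ => H (x₀ + lam • u)) 0) 0 := (hsliceAt u).hasDerivAt
        have hh : HasDerivAt (fun lam : ℂ => b * lam) b 0 := by
          simpa using (hasDerivAt_id (0:ℂ)).const_mul b
        have hcomp : HasDerivAt ((fun lam : ℂ => H (x₀ + lam • u)) ∘ (fun lam : ℂ => b * lam))
            (b • deriv (fun lam : ℂ => H (x₀ + lam • u)) 0) 0 :=
          HasDerivAt.scomp_of_eq (𝕜 := ℂ) 0 hg hh (by simp)
        have heq : (fun lam : ℂ => H (x₀ + lam • (b • u)))
            = (fun lam : ℂ => H (x₀ + (b * lam) • u)) := by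
          funext lam; rw [smul_smul, mul_comm]
        have hcomp' : HasDerivAt (fun lam : ℂ => H (x₀ + lam • (b • u)))
            (b • deriv (fun lam : ℂ => H (x₀ + lam • u)) 0) 0 := by
          rw [heq]; exact hcomp
        simp only [hT₀]
        rw [hcomp'.deriv]
    -- the candidate derivative as a continuous linear map
    set Tlin : X →L[ℂ] Z := LinearMap.mkContinuous
      { toFun := T₀, map_add' := hadd, map_smul' := hsmul } K₂ hT₀bd with hTlin
    -- quadratic Taylor estimate
    have hquad : ∀ w : X, w ≠ 0 → ‖w‖ < ρ₀ →
        ‖H (x₀ + w) - H x₀ - Tlin w‖ ≤ 2 * K₂ / ρ₀ * ‖w‖ ^ 2 := by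
      intro w hw hwρ
      have hw0 : 0 < ‖w‖ := norm_pos_iff.mpr hw
      set P : ℝ := ρ₀ / ‖w‖ with hPd
      have hP0 : 0 < P := by rw [hPd]; positivity
      have hP1 : 1 < P := by rw [hPd, lt_div_iff₀ hw0, one_mul]; exact hwρ
      set f : ℂ → Z := fun lam => H (x₀ + lam • w) - lam • (Tlin w) with hfdef
      have hlind : Differentiable ℂ (fun lam : ℂ => lam • (Tlin w)) :=
        differentiable_id.smul_const (Tlin w)
      have hfdiff : DifferentiableOn ℂ f (ball 0 P) :=
        (hsliceDiff w hw).sub hlind.differentiableOn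
      have hlinderiv : deriv (fun lam : ℂ => lam • (Tlin w)) 0 = Tlin w := by
        have h1 : HasDerivAt (fun lam : ℂ => lam • (Tlin w)) ((1:ℂ) • (Tlin w)) 0 :=
          (hasDerivAt_id (0:ℂ)).smul_const (Tlin w)
        rw [one_smul] at h1
        exact h1.deriv
      have hTw : Tlin w = deriv (fun lam : ℂ => H (x₀ + lam • w)) 0 := rfl
      have hderiv0 : deriv f 0 = 0 := by
        rw [hfdef, deriv_fun_sub (hsliceAt w) hlind.differentiableAt, hlinderiv, hTw, sub_self]
      have hf0 : f 0 = H x₀ := by rw [hfdef]; simp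
      have hfb : ∀ lam ∈ ball (0:ℂ) P, ‖f lam - f 0‖ ≤ 2 * K₂ * ρ₀ := by
        intro lam hlam
        have h1 := hsliceLip w hw lam hlam
        have h2 : ‖lam • (Tlin w)‖ ≤ ‖lam‖ * (K₂ * ‖w‖) := by
          rw [norm_smul]
          exact mul_le_mul_of_nonneg_left (hT₀bd w) (norm_nonneg lam)
        have hlamP : ‖lam‖ < P := mem_ball_zero_iff.mp hlam
        have h4 : ‖lam‖ * ‖w‖ ≤ ρ₀ := by
          rw [hPd, lt_div_iff₀ hw0] at hlamP
          exact hlamP.le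
        have heq : f lam - f 0 = (H (x₀ + lam • w) - H x₀) - lam • (Tlin w) := by
          simp only [hfdef, zero_smul, add_zero, sub_zero]
          abel
        rw [heq]
        refine (norm_sub_le _ _).trans ?_
        have h5 : K₂ * (‖lam‖ * ‖w‖) ≤ K₂ * ρ₀ := mul_le_mul_of_nonneg_left h4 hK₂0
        have h6 : ‖lam‖ * (K₂ * ‖w‖) = K₂ * (‖lam‖ * ‖w‖) := by ring
        rw [h6] at h2
        linarith
      have hq := aux_quad_bound hP0 hfdiff hfb hderiv0 1
        (by rw [mem_ball_zero_iff, norm_one]; exact hP1)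
      have hf1 : f 1 - f 0 = H (x₀ + w) - H x₀ - Tlin w := by
        simp only [hfdef, one_smul, zero_smul, add_zero, sub_zero]
        abel
      rw [hf1, norm_one] at hq
      have hPval : 2 * K₂ * ρ₀ / P ^ 2 * 1 ^ 2 = 2 * K₂ / ρ₀ * ‖w‖ ^ 2 := by
        rw [hPd]
        field_simp
      rw [hPval] at hq
      exact hq
    have hfd : HasFDerivAt H Tlin x₀ := by
      rw [hasFDerivAt_iff_isLittleO_nhds_zero]
      rw [Asymptotics.isLittleO_iff]
      intro ε hε
      have hC : (0:ℝ) ≤ 2 * K₂ / ρ₀ := by positivity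
      have hpos : (0:ℝ) < min ρ₀ (ε / (2 * K₂ / ρ₀ + 1)) := lt_min hρ₀0 (by positivity)
      filter_upwards [ball_mem_nhds (0:X) hpos] with w hwb
      rw [mem_ball_zero_iff] at hwb
      rcases eq_or_ne w 0 with rfl | hw
      · simp
      · have h1 := hquad w hw (lt_of_lt_of_le hwb (min_le_left _ _))
        have h2 : ‖w‖ < ε / (2 * K₂ / ρ₀ + 1) := lt_of_lt_of_le hwb (min_le_right _ _)
        have hw0 : 0 < ‖w‖ := norm_pos_iff.mpr hw
        rw [lt_div_iff₀ (by positivity : (0:ℝ) < 2 * K₂ / ρ₀ + 1)] at h2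
        have h3 : 2 * K₂ / ρ₀ * ‖w‖ ≤ ε := by nlinarith
        calc ‖H (x₀ + w) - H x₀ - Tlin w‖ ≤ 2 * K₂ / ρ₀ * ‖w‖ ^ 2 := h1
          _ = (2 * K₂ / ρ₀ * ‖w‖) * ‖w‖ := by ring
          _ ≤ ε * ‖w‖ := mul_le_mul_of_nonneg_right h3 (norm_nonneg w)
    exact hfd.differentiableAt
  refine ⟨H, fun x hx => (hHdiff x hx).differentiableWithinAt, hext, hHbd, ?_⟩
  -- uniqueness
  intro H' hH'd hH'e x hx
  haveI := hTd x hx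
  have h1 : Tendsto H' (𝓝[T] x) (𝓝 (H' x)) := by
    have := (hH'd.continuousOn).continuousWithinAt (x := x) hx
    exact this.mono_left (nhdsWithin_mono x (Set.inter_subset_right))
  have h2 : Tendsto g₀ (𝓝[T] x) (𝓝 (H' x)) := by
    refine h1.congr' ?_
    filter_upwards [self_mem_nhdsWithin] with p hp
    obtain ⟨hp𝔷, hpb⟩ := hp
    obtain ⟨j, hj⟩ := Set.mem_iUnion.mp hp𝔷
    rw [hH'e j ⟨hj, hpb⟩, hg₀ j p ⟨hj, hpb⟩]
  exact tendsto_nhds_unique h2 (htend x hx)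
end

section
/- Let P : M → N be a holomorphic open map of complex Banach manifolds, F → N a holomorphic Banach bundle, t ↦ x_t ∈ M a path on [a,b], and for each t let g_t be an F-valued holomorphic germ at P(x_t) and k_t its pullback along P, a P*F-valued holomorphic germ at x_t. If t ↦ k_t is a continuous family of germs (i.e., an analytic continuation along the path t ↦ x_t), then t ↦ g_t is a continuous family of germs (an analytic continuation along t ↦ P(x_t)). -/
open scoped Manifold

variable {𝕄 𝕅 : Type*} [NormedAddCommGroup 𝕄] [NormedSpace ℂ 𝕄]
  [NormedAddCommGroup 𝕅] [NormedSpace ℂ 𝕅]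
  {M : Type*} [TopologicalSpace M] [ChartedSpace 𝕄 M]
  {N : Type*} [TopologicalSpace N] [ChartedSpace 𝕅 N]
  {Z : Type*} [NormedAddCommGroup Z] [NormedSpace ℂ Z]

/-- `IsGermContinuousFamily f x a b` says that the family of germs at `x t` of the local
holomorphic sections `f t`, `t ∈ [a,b]`, is continuous (i.e. is an analytic continuation
along the path `x`): each `f t` is holomorphic near `x t`, and for `τ` near `t` the germ of
`f τ` at `x τ` is the germ of one fixed local holomorphic section defined near `x t`
(namely of `f t`). -/
def IsGermContinuousFamily (𝕄 : Type*) {M : Type*} [NormedAddCommGroup 𝕄] [NormedSpace ℂ 𝕄]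
    [TopologicalSpace M] [ChartedSpace 𝕄 M]
    {Z : Type*} [NormedAddCommGroup Z] [NormedSpace ℂ Z]
    (f : ℝ → M → Z) (x : ℝ → M) (a b : ℝ) : Prop :=
  ∀ t ∈ Set.Icc a b,
    (∃ U : Set M, IsOpen U ∧ x t ∈ U ∧
      MDifferentiableOn 𝓘(ℂ, 𝕄) 𝓘(ℂ, Z) (f t) U) ∧
    ∀ᶠ τ in nhdsWithin t (Set.Icc a b),
      ∃ V : Set M, IsOpen V ∧ x τ ∈ V ∧ Set.EqOn (f τ) (f t) V

/-- Let `P : M → N` be a holomorphic open map of complex Banach manifolds,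
`t ↦ x_t ∈ M` a path on `[a,b]`, and for each `t` let `g_t` be a holomorphic germ at `P(x_t)`
(valued in a holomorphic Banach bundle, here represented in a trivialization by functions into
a Banach space `Z`), with pullback germ `k_t = g_t ∘ P` at `x_t`.  If `t ↦ k_t` is a
continuous family of germs (an analytic continuation along `t ↦ x_t`), then `t ↦ g_t` is a
continuous family of germs (an analytic continuation along `t ↦ P(x_t)`). -/
theorem stmt_19
    (P : M → N) (hP : MDifferentiable 𝓘(ℂ, 𝕄) 𝓘(ℂ, 𝕅) P) (hPopen : IsOpenMap P)
    (a b : ℝ) (hab : a ≤ b)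
    (x : ℝ → M) (hx : ContinuousOn x (Set.Icc a b))
    (g : ℝ → N → Z)
    (hg : ∀ t ∈ Set.Icc a b, ∃ V : Set N, IsOpen V ∧ P (x t) ∈ V ∧
      MDifferentiableOn 𝓘(ℂ, 𝕅) 𝓘(ℂ, Z) (g t) V)
    (hk : IsGermContinuousFamily 𝕄 (fun t => g t ∘ P) x a b) :
    IsGermContinuousFamily 𝕅 g (fun t => P (x t)) a b := by
  intro t ht
  refine ⟨hg t ht, ?_⟩
  filter_upwards [(hk t ht).2] with τ hτ
  obtain ⟨V, hVopen, hxV, hVeq⟩ := hτ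
  refine ⟨P '' V, hPopen V hVopen, ⟨x τ, hxV, rfl⟩, ?_⟩
  rintro y ⟨v, hv, rfl⟩
  exact hVeq hv
end
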